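/- arXiv:0910.5019 — 3 statements merged into one kernel-verified Lean document; each statement's English description precedes it below -/
import Mathlib

section
/- The Whitehead graph of the word w₂ = aabbacbccadbdcdd in the free group on generators a, b, c, d is isomorphic (as a multigraph) to the complete bipartite graph K₄,₄, with parts {a, b, c, d} and {a⁻¹, b⁻¹, c⁻¹, d⁻¹}. -/
/-- The formal inverse of a letter, encoded as a generator with a sign. -/
def letterInv {n : ℕ} (p : Fin n × Bool) : Fin n × Bool := (p.1, !p.2)

/-- The edge multiset of the Whitehead graph of a cyclic word. -/
def whiteheadEdges (n L : ℕ) (v : Fin L → Fin n × Bool) :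
    Multiset (Sym2 (Fin n × Bool)) :=
  ↑(List.ofFn fun i : Fin L => s(v i, letterInv (v (finRotate L i))))

/-- The Whitehead graph of `w₂ = aabbacbccadbdcdd ∈ F₄ = ⟨a,b,c,d⟩` (with `a = 0`,
`b = 1`, `c = 2`, `d = 3`, and `true` marking a positive letter) is the complete
bipartite graph `K₄,₄` with parts `{a,b,c,d}` and `{a⁻¹,b⁻¹,c⁻¹,d⁻¹}`: its edge
multiset has exactly one edge joining each positive generator to each inverse. -/
theorem stmt10 :
    whiteheadEdges 4 16
      (fun i => (![0, 0, 1, 1, 0, 2, 1, 2, 2, 0, 3, 1, 3, 2, 3, 3] i, true)) =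
      (Finset.univ : Finset (Fin 4 × Fin 4)).val.map
        (fun p => s(((p.1 : Fin 4), true), ((p.2 : Fin 4), false))) := by
  decide
end

section
/- The doubled graph W(w₁²), i.e. K₃,₃ with every edge doubled (18 edges), decomposes as an edge-disjoint union of one simple cycle of length 6 and three simple cycles of length 4. -/
/-- The edge multiset of the cycle running through the vertices of a list in order
(with wrap-around). -/
def cycleEdges {α : Type*} (l : List α) : Multiset (Sym2 α) :=
  ↑(List.ofFn fun i : Fin l.length => s(l.get i, l.get (finRotate l.length i)))

/-- The doubled `K₃,₃` (every edge of the complete bipartite graph `K₃,₃` taken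
twice, 18 edges in total) is an edge-disjoint union of one simple cycle of
length 6 and three simple cycles of length 4. -/
theorem stmt11 :
    ∃ c₁ c₂ c₃ c₄ : List (Fin 3 ⊕ Fin 3),
      c₁.Nodup ∧ c₂.Nodup ∧ c₃.Nodup ∧ c₄.Nodup ∧
      c₁.length = 6 ∧ c₂.length = 4 ∧ c₃.length = 4 ∧ c₄.length = 4 ∧
      cycleEdges c₁ + cycleEdges c₂ + cycleEdges c₃ + cycleEdges c₄ =
        (Finset.univ : Finset (Fin 3 × Fin 3)).val.map
          (fun p => s(Sum.inl p.1, Sum.inr p.2)) +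
        (Finset.univ : Finset (Fin 3 × Fin 3)).val.map
          (fun p => s(Sum.inl p.1, Sum.inr p.2)) := by
  refine ⟨[.inl 0, .inr 0, .inl 1, .inr 1, .inl 2, .inr 2],
    [.inl 0, .inr 1, .inl 2, .inr 0],
    [.inl 1, .inr 0, .inl 2, .inr 2],
    [.inl 0, .inr 1, .inl 1, .inr 2],
    by decide, by decide, by decide, by decide, rfl, rfl, rfl, rfl, ?_⟩
  decide
end

section
/- Let w be a cyclically reduced word in the free group F = ⟨a₁,…,aₙ⟩ (n ≥ 2) such that for each i, exactly two letters of w lie in {aᵢ, aᵢ⁻¹} (so |w| = 2n). If w is not a proper power, then the closed surface S = P/∼, obtained from a polygonal disk P whose boundary reads w by the side-pairing identifying the two aᵢ-labeled edges for each i, satisfies χ(S) < 1. Equivalently, not every vertex of S has valence 2. -/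
/-- Let `w` be a cyclically reduced word of length `2n` (`n ≥ 2`) in which each
generator appears (up to inversion) exactly twice, and suppose `w` is not a proper
power (the cyclic word has no nontrivial period).  Form the closed surface `S`
obtained from a `2n`-gon reading `w` by identifying the two `aᵢ`-edges (matching
`aᵢ`-tails to tails and heads to heads) for each `i`.  Then `χ(S) = |S⁽⁰⁾| − n + 1 < 1`,
i.e. the number of quotient vertices is less than `n` (not every vertex has valence 2). -/
theorem stmt14 (n : ℕ) (hn : 2 ≤ n) (w : ZMod (2 * n) → Fin n × Bool)
    (hcr : ∀ i, w (i + 1) ≠ ((w i).1, !(w i).2))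
    (htwo : ∀ g : Fin n, Nat.card {i : ZMod (2 * n) // (w i).1 = g} = 2)
    (hrootfree : ∀ d : ZMod (2 * n), (∀ i, w (i + d) = w i) → d = 0) :
    (Nat.card (Quot (fun x y : ZMod (2 * n) =>
      ∃ i j : ZMod (2 * n), i ≠ j ∧ (w i).1 = (w j).1 ∧
        ((x = (if (w i).2 then i else i + 1) ∧ y = (if (w j).2 then j else j + 1)) ∨
         (x = (if (w i).2 then i + 1 else i) ∧
          y = (if (w j).2 then j + 1 else j))))) : ℤ) - n + 1 < 1 := by
  haveI : NeZero (2 * n) := ⟨by omega⟩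
  haveI : Fact (1 < 2 * n) := ⟨by omega⟩
  set R : ZMod (2 * n) → ZMod (2 * n) → Prop := fun x y =>
      ∃ i j : ZMod (2 * n), i ≠ j ∧ (w i).1 = (w j).1 ∧
        ((x = (if (w i).2 then i else i + 1) ∧ y = (if (w j).2 then j else j + 1)) ∨
         (x = (if (w i).2 then i + 1 else i) ∧
          y = (if (w j).2 then j + 1 else j))) with hR
  suffices h : Nat.card (Quot R) < n by
    have := h; omega
  -- Step 1 : the pairing involution s
  have hs : ∀ i : ZMod (2 * n), ∃ j, j ≠ i ∧ (w j).1 = (w i).1 ∧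
      ∀ k, k ≠ i → (w k).1 = (w i).1 → k = j := by
    intro i
    have h2 := htwo (w i).1
    rw [Nat.card_eq_two_iff] at h2
    obtain ⟨a, c, hac, hset⟩ := h2
    have hiu : (⟨i, rfl⟩ : {j : ZMod (2 * n) // (w j).1 = (w i).1}) ∈
        ({a, c} : Set _) := by rw [hset]; trivial
    rcases hiu with h | h
    · refine ⟨c.1, ?_, c.2, ?_⟩
      · intro hc; exact hac (by rw [← h]; exact Subtype.ext hc.symm)
      · intro k hk hkw
        have : (⟨k, hkw⟩ : {j : ZMod (2 * n) // (w j).1 = (w i).1}) ∈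
            ({a, c} : Set _) := by rw [hset]; trivial
        rcases this with h' | h'
        · exact absurd (congrArg Subtype.val (h'.trans h.symm)) hk
        · exact congrArg Subtype.val h'
    · refine ⟨a.1, ?_, a.2, ?_⟩
      · intro hc; exact hac (by rw [← h]; exact Subtype.ext hc)
      · intro k hk hkw
        have : (⟨k, hkw⟩ : {j : ZMod (2 * n) // (w j).1 = (w i).1}) ∈
            ({a, c} : Set _) := by rw [hset]; trivial
        rcases this with h' | h'
        · exact congrArg Subtype.val h'
        · exact absurd (congrArg Subtype.val (h'.trans h.symm)) hk
  choose s hs1 hs2 hs3 using hs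
  have hss : ∀ i, s (s i) = i :=
    fun i => (hs3 (s i) i (fun h => hs1 i h.symm) (hs2 i).symm).symm
  have hsinj : Function.Injective s := fun a c h => by
    rw [← hss a, h, hss]
  -- the two gluing maps
  set A : ZMod (2 * n) → ZMod (2 * n) := fun x =>
    if (w x).2 then (if (w (s x)).2 then s x else s x + 1)
    else (if (w (s x)).2 then s x + 1 else s x) with hAdef
  set B : ZMod (2 * n) → ZMod (2 * n) := fun x =>
    if (w (x - 1)).2 then (if (w (s (x - 1))).2 then s (x - 1) + 1 else s (x - 1))
    else (if (w (s (x - 1))).2 then s (x - 1) else s (x - 1) + 1) with hBdef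
  have RA : ∀ x, R x (A x) := by
    intro x
    refine ⟨x, s x, Ne.symm (hs1 x), (hs2 x).symm, ?_⟩
    by_cases hb : (w x).2
    · left; simp [hAdef, hb]
    · right; simp [hAdef, hb]
  have RB : ∀ x, R x (B x) := by
    intro x
    refine ⟨x - 1, s (x - 1), Ne.symm (hs1 _), (hs2 _).symm, ?_⟩
    by_cases hb : (w (x - 1)).2
    · right; simp [hBdef, hb, sub_add_cancel]
    · left; simp [hBdef, hb, sub_add_cancel]
  have hAne : ∀ x, A x ≠ x := by
    intro x hx
    by_cases h1 : (w x).2 <;> by_cases h2 : (w (s x)).2 <;>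
      simp [hAdef, h1, h2] at hx
    · exact hs1 x hx
    · -- s x + 1 = x, w x = true, w (s x) = false
      have hsx : s x = x - 1 := by linear_combination hx
      apply hcr (x - 1)
      rw [sub_add_cancel]
      refine Prod.ext ?_ ?_
      · rw [← hsx]; exact (hs2 x).symm
      · rw [← hsx]; simp [h1, h2]
    · have hsx : s x = x - 1 := by linear_combination hx
      apply hcr (x - 1)
      rw [sub_add_cancel]
      refine Prod.ext ?_ ?_
      · rw [← hsx]; exact (hs2 x).symm
      · rw [← hsx]; simp [h1, h2]
    · exact hs1 x hx
  have hBne : ∀ x, B x ≠ x := by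
    intro x hx
    by_cases h1 : (w (x - 1)).2 <;> by_cases h2 : (w (s (x - 1))).2 <;>
      simp [hBdef, h1, h2] at hx
    · exact hs1 (x - 1) (by linear_combination hx)
    · -- s (x-1) = x
      apply hcr (x - 1)
      rw [sub_add_cancel]
      have hg := hs2 (x - 1); rw [hx] at hg
      have hb2 := h2; rw [hx] at hb2
      refine Prod.ext hg ?_
      simp [h1, hb2]
    · apply hcr (x - 1)
      rw [sub_add_cancel]
      have hg := hs2 (x - 1); rw [hx] at hg
      have hb2 := h2; rw [hx] at hb2
      refine Prod.ext hg ?_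
      simp [h1, hb2]
    · exact hs1 (x - 1) (by linear_combination hx)
  -- counting
  haveI : Finite (Quot R) := Quot.finite R
  set q : ZMod (2 * n) → Quot R := Quot.mk R with hqdef
  have hqA : ∀ x, q x = q (A x) := fun x => Quot.sound (RA x)
  have hqB : ∀ x, q x = q (B x) := fun x => Quot.sound (RB x)
  set p : Quot R × Bool → ZMod (2 * n) :=
    fun cu => if cu.2 then cu.1.out else A cu.1.out with hpdef
  have hqp : ∀ c u, q (p (c, u)) = c := by
    intro c u
    cases u
    · show q (A c.out) = c
      rw [← hqA c.out]; exact Quot.out_eq c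
    · show q c.out = c
      exact Quot.out_eq c
  have hpinj : Function.Injective p := by
    rintro ⟨c, u⟩ ⟨c', u'⟩ h
    have hc : c = c' := by rw [← hqp c u, ← hqp c' u', h]
    subst hc
    cases u <;> cases u'
    · rfl
    · exact absurd (show A c.out = c.out from h).symm (Ne.symm (hAne c.out))
    · exact absurd (show c.out = A c.out from h).symm (hAne c.out)
    · rfl
  have hcard2 : Nat.card (Quot R × Bool) = 2 * Nat.card (Quot R) := by
    rw [Nat.card_prod]
    simp [Nat.card_eq_fintype_card, mul_comm]
  have hcardZ : Nat.card (ZMod (2 * n)) = 2 * n := by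
    rw [Nat.card_eq_fintype_card, ZMod.card]
  have hle : Nat.card (Quot R) ≤ n := by
    have := Nat.card_le_card_of_injective p hpinj
    rw [hcard2, hcardZ] at this
    omega
  rcases lt_or_eq_of_le hle with h | heq
  · exact h
  exfalso
  -- equality case : p is bijective
  have hbij : Function.Bijective p := by
    rw [Nat.bijective_iff_injective_and_card]
    exact ⟨hpinj, by rw [hcard2, hcardZ, heq]⟩
  have hAB : ∀ x, A x = B x := by
    intro x
    obtain ⟨⟨c1, u1⟩, hx⟩ := hbij.2 x
    obtain ⟨⟨c2, u2⟩, hA⟩ := hbij.2 (A x)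
    obtain ⟨⟨c3, u3⟩, hB⟩ := hbij.2 (B x)
    have e1 : c1 = q x := by have := hqp c1 u1; rw [hx] at this; exact this.symm
    have e2 : c2 = q x := by
      have := hqp c2 u2; rw [hA, ← hqA] at this; exact this.symm
    have e3 : c3 = q x := by
      have := hqp c3 u3; rw [hB, ← hqB] at this; exact this.symm
    subst e1; subst e2; subst e3
    cases u2 <;> cases u3
    · rw [← hA, ← hB]
    · cases u1
      · exact absurd (hx.symm.trans hA) (Ne.symm (hAne x))
      · exact absurd (hx.symm.trans hB) (Ne.symm (hBne x))
    · cases u1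
      · exact absurd (hx.symm.trans hB) (Ne.symm (hBne x))
      · exact absurd (hx.symm.trans hA) (Ne.symm (hAne x))
    · rw [← hA, ← hB]
  -- explicit values of A and B
  have hone : (1 : ZMod (2 * n)) ≠ 0 := one_ne_zero
  have hA1 : ∀ x, (w x).2 = (w (s x)).2 → A x = s x := by
    intro x h
    simp only [hAdef]
    rw [h]
    rcases Bool.eq_false_or_eq_true (w (s x)).2 with hb' | hb' <;> simp [hb']
  have hA2 : ∀ x, (w x).2 ≠ (w (s x)).2 → A x = s x + 1 := by
    intro x h
    simp only [hAdef]
    rcases Bool.eq_false_or_eq_true (w x).2 with hb | hb <;>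
      rcases Bool.eq_false_or_eq_true (w (s x)).2 with hb' | hb' <;>
      first
        | exact absurd (hb.trans hb'.symm) h
        | simp [hb, hb']
  have hB1 : ∀ x, (w (x - 1)).2 = (w (s (x - 1))).2 → B x = s (x - 1) + 1 := by
    intro x h
    simp only [hBdef]
    rw [h]
    rcases Bool.eq_false_or_eq_true (w (s (x - 1))).2 with hb' | hb' <;> simp [hb']
  have hB2 : ∀ x, (w (x - 1)).2 ≠ (w (s (x - 1))).2 → B x = s (x - 1) := by
    intro x h
    simp only [hBdef]
    rcases Bool.eq_false_or_eq_true (w (x - 1)).2 with hb | hb <;>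
      rcases Bool.eq_false_or_eq_true (w (s (x - 1))).2 with hb' | hb' <;>
      first
        | exact absurd (hb.trans hb'.symm) h
        | simp [hb, hb']
  -- dichotomy
  have hone1 : ∀ y : ZMod (2 * n), y + 1 ≠ y := by
    intro y h
    have h0 : (1 : ZMod (2 * n)) = 0 := by linear_combination h
    exact one_ne_zero h0
  have dich1 : ∀ y : ZMod (2 * n), (w y).2 = (w (s y)).2 →
      s (y + 1) = s y + 1 ∧ (w (y + 1)).2 = (w (s (y + 1))).2 := by
    intro y hQ
    have hAB' := hAB (y + 1)
    have hsub : (y + 1) - 1 = y := by ring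
    have hBv : B (y + 1) = s y + 1 := by
      rw [hB1 (y + 1) (by rw [hsub]; exact hQ), hsub]
    by_cases hQ' : (w (y + 1)).2 = (w (s (y + 1))).2
    · rw [hA1 (y + 1) hQ', hBv] at hAB'
      exact ⟨hAB', hQ'⟩
    · exfalso
      rw [hA2 (y + 1) hQ', hBv] at hAB'
      exact hone1 y (hsinj (show s (y + 1) = s y by linear_combination hAB'))
  have dich2 : ∀ y : ZMod (2 * n), (w y).2 ≠ (w (s y)).2 →
      s (y + 1) = s y - 1 ∧ (w (y + 1)).2 ≠ (w (s (y + 1))).2 := by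
    intro y hQ
    have hAB' := hAB (y + 1)
    have hsub : (y + 1) - 1 = y := by ring
    have hBv : B (y + 1) = s y := by
      rw [hB2 (y + 1) (by rw [hsub]; exact hQ), hsub]
    by_cases hQ' : (w (y + 1)).2 = (w (s (y + 1))).2
    · exfalso
      rw [hA1 (y + 1) hQ', hBv] at hAB'
      exact hone1 y (hsinj hAB')
    · rw [hA2 (y + 1) hQ', hBv] at hAB'
      exact ⟨by linear_combination hAB', hQ'⟩
  have hcastval : ∀ y : ZMod (2 * n), ((y.val : ℕ) : ZMod (2 * n)) = y :=
    fun y => ZMod.natCast_rightInverse y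
  by_cases hQ0 : (w (0 : ZMod (2 * n))).2 = (w (s 0)).2
  · -- rotation case : w is periodic with period n
    have hind : ∀ k : ℕ, s ((k : ZMod (2 * n))) = s 0 + (k : ZMod (2 * n)) ∧
        (w ((k : ZMod (2 * n)))).2 = (w (s ((k : ZMod (2 * n))))).2 := by
      intro k
      induction k with
      | zero => simpa using hQ0
      | succ m ih =>
        have hd := dich1 _ ih.2
        push_cast
        refine ⟨?_, hd.2⟩
        rw [hd.1, ih.1]; ring
    have hsall : ∀ y : ZMod (2 * n), s y = s 0 + y ∧ (w y).2 = (w (s y)).2 := by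
      intro y
      have h := hind y.val
      rwa [hcastval y] at h
    have h2s0 : s 0 + s 0 = 0 := by
      have h := hss 0
      rw [(hsall (s 0)).1] at h
      exact h
    have hs0n : s 0 = (n : ZMod (2 * n)) := by
      have hv : (((s 0).val : ℕ) : ZMod (2 * n)) = s 0 := hcastval _
      have h2 : (((2 * (s 0).val : ℕ)) : ZMod (2 * n)) = 0 := by
        push_cast
        rw [hv]; linear_combination h2s0
      rw [ZMod.natCast_eq_zero_iff] at h2
      obtain ⟨k, hk⟩ := h2
      have hlt : (s 0).val < 2 * n := ZMod.val_lt _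
      have hne : s 0 ≠ 0 := hs1 0
      rw [mul_assoc] at hk
      have hk' : (s 0).val = n * k := Nat.eq_of_mul_eq_mul_left (by norm_num) hk
      rcases Nat.lt_or_ge k 2 with hk2 | hk2
      · interval_cases k
        · exfalso; apply hne; rw [← hv]; simp [hk']
        · rw [← hv, hk']; simp
      · exfalso
        have h1 : 2 * n ≤ n * k := le_trans (by omega) (Nat.mul_le_mul_left n hk2)
        exact absurd (hk' ▸ hlt) (not_lt.mpr h1)
    have hper : ∀ i : ZMod (2 * n), w (i + (n : ZMod (2 * n))) = w i := by
      intro i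
      have h := hsall i
      have hsi : s i = i + (n : ZMod (2 * n)) := by rw [h.1, hs0n]; ring
      rw [← hsi]
      exact Prod.ext (hs2 i) h.2.symm
    have hz := hrootfree _ hper
    rw [ZMod.natCast_eq_zero_iff] at hz
    have := Nat.le_of_dvd (by omega) hz
    omega
  · -- reflection case : impossible
    have hind : ∀ k : ℕ, s ((k : ZMod (2 * n))) = s 0 - (k : ZMod (2 * n)) ∧
        (w ((k : ZMod (2 * n)))).2 ≠ (w (s ((k : ZMod (2 * n))))).2 := by
      intro k
      induction k with
      | zero => simpa using hQ0
      | succ m ih =>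
        have hd := dich2 _ ih.2
        push_cast
        refine ⟨?_, hd.2⟩
        rw [hd.1, ih.1]; ring
    have hsall : ∀ y : ZMod (2 * n), s y = s 0 - y := by
      intro y
      have h := hind y.val
      rw [hcastval y] at h
      exact h.1
    have hdiff : ∀ y : ZMod (2 * n), (w y).2 ≠ (w (s y)).2 := by
      intro y
      have h := hind y.val
      rw [hcastval y] at h
      exact h.2
    have hhalf : ∃ x : ZMod (2 * n), x + x = s 0 ∨ x + x = s 0 + 1 := by
      rcases Nat.even_or_odd (s 0).val with ⟨k, hk⟩ | ⟨k, hk⟩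
      · refine ⟨(k : ZMod (2 * n)), Or.inl ?_⟩
        rw [← hcastval (s 0), hk]; push_cast; ring
      · refine ⟨((k + 1 : ℕ) : ZMod (2 * n)), Or.inr ?_⟩
        rw [← hcastval (s 0), hk]; push_cast; ring
    obtain ⟨x, hx | hx⟩ := hhalf
    · exact hs1 x (by rw [hsall x]; linear_combination -hx)
    · apply hAne x
      rw [hA2 x (hdiff x), hsall x]
      linear_combination -hx
end
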